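/- Let τ be a monoid congruence on 𝔄* such that the empty word 1 forms a singleton τ-class, and let W = [w]_τ be a single τ-class for some nonempty word w. Assume that for every monoid M, if W is stable with respect to M then every factor of every word of W is a τ-term for M. Define M_τ(W) as the quotient of 𝔄*/τ in which all τ-classes c for which there exist no τ-classes p, s with p·c·s = [w]_τ in 𝔄*/τ are identified to a single (zero) element, all other τ-classes remaining distinct (if every τ-class divides [w]_τ, set M_τ(W) = 𝔄*/τ). Then the monoids M_τ(W) and M_synt(W) satisfy exactly the same identities, i.e., they generate the same variety of monoids. -/

import Mathlib

/-- Words over the countably infinite alphabet `ℕ`. -/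
abbrev Word : Type := List ℕ

/-- A monoid `M` satisfies the identity `u ≈ v` if every substitution of letters by
elements of `M` (equivalently, every monoid homomorphism from the free monoid) equalizes
`u` and `v`. -/
def Satisfies (M : Type*) [Monoid M] (u v : Word) : Prop :=
  ∀ φ : ℕ → M, (u.map φ).prod = (v.map φ).prod

/-- A set of words `W` is stable with respect to a monoid `M`. -/
def Stable (W : Set Word) (M : Type*) [Monoid M] : Prop :=
  ∀ u v : Word, u ∈ W → Satisfies M u v → v ∈ W

/-- `u` is a `τ`-term for the monoid `M`. -/
def IsTerm (τ : Word → Word → Prop) (M : Type*) [Monoid M] (u : Word) : Prop :=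
  ∀ v : Word, Satisfies M u v → τ u v

/-- The set of simple letters of a word. -/
def simpSet (u : Word) : Set ℕ := {x | u.count x = 1}

/-- The set of multiple letters of a word. -/
def mulSet (u : Word) : Set ℕ := {x | 2 ≤ u.count x}

/-- The set of letters of a word. -/
def conSet (u : Word) : Set ℕ := {x | x ∈ u}

/-- The monoid congruence on the free monoid generated by the pairs `(a, a²)`. -/
inductive tau1 : Word → Word → Prop
  | base (a : ℕ) : tau1 [a] [a, a]
  | refl (u : Word) : tau1 u u
  | symm {u v : Word} : tau1 u v → tau1 v u
  | trans {u v x : Word} : tau1 u v → tau1 v x → tau1 u x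
  | append {u v u' v' : Word} : tau1 u v → tau1 u' v' → tau1 (u ++ u') (v ++ v')

/-- The relation γ. -/
def gamma (u v : Word) : Prop := simpSet u = simpSet v ∧ mulSet u = mulSet v

/-- The relation `τ₁ ∧ γ`. -/
def tau1gamma (u v : Word) : Prop := tau1 u v ∧ gamma u v

/-- A word is block-simple if every factor all of whose letters are multiple
(in particular, every block) involves at most one letter. -/
def BlockSimple (u : Word) : Prop :=
  ∀ p f s : Word, u = p ++ f ++ s → (∀ x ∈ f, x ∈ mulSet u) →
    ∀ x ∈ f, ∀ y ∈ f, x = y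

/-- `assemble m t A = A 0 ++ t 0 :: A 1 ++ t 1 :: ... ++ t (m-1) :: A m`:
the word with blocks `A i` separated by the letters `t i`. -/
def assemble (m : ℕ) (t : Fin m → ℕ) (A : Fin (m + 1) → Word) : Word :=
  A 0 ++ (List.ofFn fun i : Fin m => t i :: A i.succ).flatten

/-- Common core of the relations `β` and `∼_Q`: `u` and `v` decompose into blocks
separated by the same simple letters in the same order, corresponding blocks have the
same content; when `withOrder = true`, in corresponding blocks the order of first
occurrences of letters coincides. -/
def betaAux (withOrder : Bool) (u v : Word) : Prop :=
  ∃ (m : ℕ) (t : Fin m → ℕ) (A B : Fin (m + 1) → Word),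
    u = assemble m t A ∧ v = assemble m t B ∧
    (∀ i : Fin m, u.count (t i) = 1) ∧ (∀ i : Fin m, v.count (t i) = 1) ∧
    (∀ i : Fin (m + 1), ∀ x ∈ A i, x ∈ mulSet u) ∧
    (∀ i : Fin (m + 1), ∀ x ∈ B i, x ∈ mulSet v) ∧
    (∀ i : Fin (m + 1), ∀ x : ℕ, x ∈ A i ↔ x ∈ B i) ∧
    (withOrder = true → ∀ i : Fin (m + 1), ∀ x y : ℕ, x ∈ A i → y ∈ A i → x ≠ y →
      ((A i).idxOf x < (A i).idxOf y ↔ (B i).idxOf x < (B i).idxOf y))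

/-- The relation β. -/
def beta : Word → Word → Prop := betaAux true

/-- The relation `∼_Q` (β without the condition on the order of first occurrences). -/
def simQ : Word → Word → Prop := betaAux false

/-- The words `u_n` (letters: `a = 0`, `b = 1`, `t_k = k + 1`). -/
def uW : ℕ → Word
  | 0 => [0, 0, 1, 1]
  | k + 1 => (if k % 2 = 0 then 0 else 1) :: (k + 2) :: uW k

/-- The words `v_n` (letters: `a = 0`, `b = 1`, `t_k = k + 1`). -/
def vW : ℕ → Word
  | 0 => [1, 1, 0, 0]
  | k + 1 => (if k % 2 = 0 then 0 else 1) :: (k + 2) :: vW k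

/-- A monoid satisfies the identity system
`Σ_n = {xtx ≈ xtx², xtx ≈ x²tx, xy²x ≈ x²y², u_n ≈ v_n}`. -/
def SatSigma (n : ℕ) (N : Type*) [Monoid N] : Prop :=
  Satisfies N [0, 1, 0] [0, 1, 0, 0] ∧ Satisfies N [0, 1, 0] [0, 0, 1, 0] ∧
  Satisfies N [0, 1, 1, 0] [0, 0, 1, 1] ∧ Satisfies N (uW n) (vW n)

/-- A monoid is finitely based. -/
def FinBased (M : Type*) [Monoid M] : Prop :=
  ∃ S : Finset (Word × Word),
    (∀ p ∈ S, Satisfies M p.1 p.2) ∧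
    ∀ (N : Type) [Monoid N], (∀ p ∈ S, Satisfies N p.1 p.2) →
      ∀ u v : Word, Satisfies M u v → Satisfies N u v

/-- `U_n = x y₁² y₂² ⋯ y_n² x` (letters: `x = 0`, `y_i = i`). -/
def Uw (n : ℕ) : Word := 0 :: (((List.range n).map fun i => [i + 1, i + 1]).flatten ++ [0])

/-- `V_n = x y₁² x y₂² x ⋯ x y_n² x` (letters: `x = 0`, `y_i = i`). -/
def Vw (n : ℕ) : Word := 0 :: ((List.range n).map fun i => [i + 1, i + 1, 0]).flatten

/-- The language `a⁺bb⁺ta⁺ = {aⁱ bʲ t aᵏ : i, k ≥ 1, j ≥ 2}` (`a = 0`, `b = 1`, `t = 2`). -/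
def Lab : Set Word := {w | ∃ i j k : ℕ, 1 ≤ i ∧ 2 ≤ j ∧ 1 ≤ k ∧
  w = List.replicate i 0 ++ List.replicate j 1 ++ 2 :: List.replicate k 0}

/-- The β-class of `atb²a` as an explicit language:
`{aⁱ t bʲ a w : i ≥ 1, j ≥ 2} ∪ {aⁱ t bʲ aᵏ b w : i, j, k ≥ 1}`, `w ∈ {a,b}*`
(`a = 0`, `b = 1`, `t = 2`). -/
def LatBBa : Set Word :=
  {w | (∃ i j : ℕ, 1 ≤ i ∧ 2 ≤ j ∧ ∃ r : Word, (∀ x ∈ r, x = 0 ∨ x = 1) ∧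
      w = List.replicate i 0 ++ 2 :: (List.replicate j 1 ++ 0 :: r)) ∨
    (∃ i j k : ℕ, 1 ≤ i ∧ 1 ≤ j ∧ 1 ≤ k ∧ ∃ r : Word, (∀ x ∈ r, x = 0 ∨ x = 1) ∧
      w = List.replicate i 0 ++ 2 :: (List.replicate j 1 ++ (List.replicate k 0 ++ 1 :: r)))}

/-- `u` is a factor (subword) of `x`. -/
def IsFactorOf (u x : Word) : Prop := ∃ p s : Word, x = p ++ u ++ s

/-- The syntactic congruence of a language `W`. -/
def SyntCon (W : Set Word) : Con (FreeMonoid ℕ) where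
  r u v := ∀ p s : Word,
    p ++ FreeMonoid.toList u ++ s ∈ W ↔ p ++ FreeMonoid.toList v ++ s ∈ W
  iseqv := ⟨fun _ _ _ => Iff.rfl, fun h p s => (h p s).symm,
    fun h h' p s => (h p s).trans (h' p s)⟩
  mul' := by
    intro w x y z h h' p s
    have h1 := h p (FreeMonoid.toList y ++ s)
    have h2 := h' (p ++ FreeMonoid.toList x) s
    simp only [FreeMonoid.toList_mul, List.append_assoc] at h1 h2 ⊢
    exact h1.trans h2

/-- The syntactic monoid of a language `W`. -/
abbrev SyntMonoid (W : Set Word) : Type := (SyntCon W).Quotient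

/-! ### Concrete finite monoids -/

/-- The 7-element monoid `A¹`: identity `e1` adjoined to the semigroup `A = ⟨a,b,c ∣ a²=a, b²=b, ab=ca=0, ac=cb=c⟩ = {a,b,c,ba,bc,0}` (`z0` is the zero). -/
inductive A1M : Type
  | e1 | a | b | c | ba | bc | z0
deriving DecidableEq

/-- Multiplication of `A1M`. -/
def A1M.mul : A1M → A1M → A1M
  | .e1, .e1 => .e1
  | .e1, .a => .a
  | .e1, .b => .b
  | .e1, .c => .c
  | .e1, .ba => .ba
  | .e1, .bc => .bc
  | .e1, .z0 => .z0
  | .a, .e1 => .a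
  | .a, .a => .a
  | .a, .b => .z0
  | .a, .c => .c
  | .a, .ba => .z0
  | .a, .bc => .z0
  | .a, .z0 => .z0
  | .b, .e1 => .b
  | .b, .a => .ba
  | .b, .b => .b
  | .b, .c => .bc
  | .b, .ba => .ba
  | .b, .bc => .bc
  | .b, .z0 => .z0
  | .c, .e1 => .c
  | .c, .a => .z0
  | .c, .b => .c
  | .c, .c => .z0
  | .c, .ba => .z0
  | .c, .bc => .z0
  | .c, .z0 => .z0
  | .ba, .e1 => .ba
  | .ba, .a => .ba
  | .ba, .b => .z0
  | .ba, .c => .bc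
  | .ba, .ba => .z0
  | .ba, .bc => .z0
  | .ba, .z0 => .z0
  | .bc, .e1 => .bc
  | .bc, .a => .z0
  | .bc, .b => .bc
  | .bc, .c => .z0
  | .bc, .ba => .z0
  | .bc, .bc => .z0
  | .bc, .z0 => .z0
  | .z0, .e1 => .z0
  | .z0, .a => .z0
  | .z0, .b => .z0
  | .z0, .c => .z0
  | .z0, .ba => .z0
  | .z0, .bc => .z0
  | .z0, .z0 => .z0

instance : Monoid A1M where
  one := .e1
  mul := A1M.mul
  mul_assoc := by intro x y z; cases x <;> cases y <;> cases z <;> rfl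
  one_mul := by intro x; cases x <;> rfl
  mul_one := by intro x; cases x <;> rfl
/-- The 6-element monoid `E¹`: identity `e1` adjoined to the semigroup `E = ⟨a,b,c ∣ a²=ab=0, ba=ca=a, b²=bc=b, c²=cb=c⟩ = {a,b,c,ac,0}` (`z0` is the zero). -/
inductive E1M : Type
  | e1 | a | b | c | ac | z0
deriving DecidableEq

/-- Multiplication of `E1M`. -/
def E1M.mul : E1M → E1M → E1M
  | .e1, .e1 => .e1
  | .e1, .a => .a
  | .e1, .b => .b
  | .e1, .c => .c
  | .e1, .ac => .ac
  | .e1, .z0 => .z0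
  | .a, .e1 => .a
  | .a, .a => .z0
  | .a, .b => .z0
  | .a, .c => .ac
  | .a, .ac => .z0
  | .a, .z0 => .z0
  | .b, .e1 => .b
  | .b, .a => .a
  | .b, .b => .b
  | .b, .c => .b
  | .b, .ac => .ac
  | .b, .z0 => .z0
  | .c, .e1 => .c
  | .c, .a => .a
  | .c, .b => .c
  | .c, .c => .c
  | .c, .ac => .ac
  | .c, .z0 => .z0
  | .ac, .e1 => .ac
  | .ac, .a => .z0
  | .ac, .b => .ac
  | .ac, .c => .ac
  | .ac, .ac => .z0
  | .ac, .z0 => .z0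
  | .z0, .e1 => .z0
  | .z0, .a => .z0
  | .z0, .b => .z0
  | .z0, .c => .z0
  | .z0, .ac => .z0
  | .z0, .z0 => .z0

instance : Monoid E1M where
  one := .e1
  mul := E1M.mul
  mul_assoc := by intro x y z; cases x <;> cases y <;> cases z <;> rfl
  one_mul := by intro x; cases x <;> rfl
  mul_one := by intro x; cases x <;> rfl
/-- The 5-element monoid `A₀¹`: identity `e1` adjoined to the semigroup `A₀ = ⟨a,b ∣ a²=a, b²=b, ab=0⟩ = {a,b,ba,0}` (`z0` is the zero). -/
inductive A01M : Type
  | e1 | a | b | ba | z0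
deriving DecidableEq

/-- Multiplication of `A01M`. -/
def A01M.mul : A01M → A01M → A01M
  | .e1, .e1 => .e1
  | .e1, .a => .a
  | .e1, .b => .b
  | .e1, .ba => .ba
  | .e1, .z0 => .z0
  | .a, .e1 => .a
  | .a, .a => .a
  | .a, .b => .z0
  | .a, .ba => .z0
  | .a, .z0 => .z0
  | .b, .e1 => .b
  | .b, .a => .ba
  | .b, .b => .b
  | .b, .ba => .ba
  | .b, .z0 => .z0
  | .ba, .e1 => .ba
  | .ba, .a => .ba
  | .ba, .b => .z0
  | .ba, .ba => .z0
  | .ba, .z0 => .z0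
  | .z0, .e1 => .z0
  | .z0, .a => .z0
  | .z0, .b => .z0
  | .z0, .ba => .z0
  | .z0, .z0 => .z0

instance : Monoid A01M where
  one := .e1
  mul := A01M.mul
  mul_assoc := by intro x y z; cases x <;> cases y <;> cases z <;> rfl
  one_mul := by intro x; cases x <;> rfl
  mul_one := by intro x; cases x <;> rfl


/-- The 3-element monoid `L₂¹`: the two-element left-zero semigroup with identity adjoined. -/
inductive LZ1 : Type
  | e | a | b
deriving DecidableEq

instance : Fintype LZ1 := ⟨{.e, .a, .b}, by intro x; cases x <;> decide⟩

instance : Monoid LZ1 where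
  one := .e
  mul x y := match x with
    | .e => y
    | .a => .a
    | .b => .b
  mul_assoc := by decide
  one_mul := by decide
  mul_one := by decide

/-- The 3-element monoid `M(x) = {1, x, 0}` with `x·x = 0`. -/
inductive MX : Type
  | e | x | z
deriving DecidableEq

instance : Fintype MX := ⟨{.e, .x, .z}, by intro x; cases x <;> decide⟩

instance : Monoid MX where
  one := .e
  mul a b := match a, b with
    | .e, b => b
    | a, .e => a
    | _, _ => .z
  mul_assoc := by decide
  one_mul := by decide
  mul_one := by decide

/-!
An identity `u ≈ v` holds in a quotient `𝔄*/c` iff `c` relates all substitution instances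
`σ(u), σ(v)`. Since `ρ ≤ ∼_W` (a `τ`-class is saturated for `τ`, and the zero class of
`M_τ(W)` consists of words that are factors of no word of `W`), every identity of
`M_τ(W)` holds in `M_synt(W)`. Conversely, let `M_synt(W)` satisfy `u ≈ v`; then it also
satisfies `σ(u) ≈ σ(v)`. As `W` is stable for its own syntactic monoid, if `σ(u)` or `σ(v)`
divides `w` modulo `τ` the hypothesis makes it a `τ`-term, so `σ(u) τ σ(v)`; otherwise both
lie in the zero class. Either way `σ(u) ρ σ(v)`.
-/

open FreeMonoid

section Identities

variable {M : Type*} [Monoid M] {u v : Word}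

theorem satisfies_iff_lift :
    Satisfies M u v ↔ ∀ φ : ℕ → M, lift φ (ofList u) = lift φ (ofList v) := by
  simp only [Satisfies, lift_ofList]

theorem Satisfies.subst (h : Satisfies M u v) (σ : ℕ → FreeMonoid ℕ) :
    Satisfies M (toList (lift σ (ofList u))) (toList (lift σ (ofList v))) := by
  rw [satisfies_iff_lift] at h ⊢
  intro φ
  simpa only [ofList_toList, hom_map_lift] using h (lift φ ∘ σ)

theorem Con.satisfies_quotient_iff (c : Con (FreeMonoid ℕ)) :
    Satisfies c.Quotient u v ↔
      ∀ σ : ℕ → FreeMonoid ℕ,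
        c (FreeMonoid.lift σ (ofList u)) (FreeMonoid.lift σ (ofList v)) := by
  rw [satisfies_iff_lift]
  constructor
  · intro h σ
    have := h (c.mk' ∘ σ)
    rw [← hom_map_lift, ← hom_map_lift] at this
    exact c.eq.mp this
  · intro h φ
    obtain ⟨σ, rfl⟩ := c.mk'_surjective.comp_left φ
    rw [← hom_map_lift, ← hom_map_lift]
    exact c.eq.mpr (h σ)

theorem Satisfies.of_con_le {c d : Con (FreeMonoid ℕ)} (hcd : c ≤ d)
    (h : Satisfies c.Quotient u v) : Satisfies d.Quotient u v := by
  rw [Con.satisfies_quotient_iff] at h ⊢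
  exact fun σ => hcd (h σ)

end Identities

theorem stable_syntMonoid (W : Set Word) : Stable W (SyntMonoid W) := by
  intro u v hu h
  have hof : ∀ z : FreeMonoid ℕ, lift of z = z :=
    DFunLike.congr_fun (lift_restrict (MonoidHom.id _))
  have := (Con.satisfies_quotient_iff _).mp h of [] []
  rw [hof, hof] at this
  simp only [List.nil_append, List.append_nil, toList_ofList] at this
  exact this.mp hu

theorem Con.le_syntCon (τ : Con (FreeMonoid ℕ)) {W : Set Word}
    (hW : ∀ u v : Word, τ (ofList u) (ofList v) → u ∈ W → v ∈ W) : τ ≤ SyntCon W := by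
  intro a b hab p s
  have hmul : τ (ofList p * a * ofList s) (ofList p * b * ofList s) :=
    τ.mul (τ.mul (τ.refl _) hab) (τ.refl _)
  exact ⟨hW _ _ hmul, hW _ _ (τ.symm hmul)⟩

theorem stmt13_general (τ : Con (FreeMonoid ℕ))
    (w : Word)
    (W : Set Word) (hWdef : W = {v : Word | τ (FreeMonoid.ofList w) (FreeMonoid.ofList v)})
    (hterm : ∀ (M : Type) [Monoid M], Stable W M →
      ∀ f : Word, (∃ x ∈ W, IsFactorOf f x) →
        IsTerm (fun u v => τ (FreeMonoid.ofList u) (FreeMonoid.ofList v)) M f)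
    (ρ : Con (FreeMonoid ℕ))
    (hρ : ∀ u v : FreeMonoid ℕ, ρ u v ↔ (τ u v ∨
      ((¬ ∃ p s : FreeMonoid ℕ, τ (p * u * s) (FreeMonoid.ofList w)) ∧
       (¬ ∃ p s : FreeMonoid ℕ, τ (p * v * s) (FreeMonoid.ofList w))))) :
    ∀ u v : Word, Satisfies ρ.Quotient u v ↔ Satisfies (SyntMonoid W) u v := by
  subst hWdef
  have hρ_le : ρ ≤ SyntCon {v | τ (ofList w) (ofList v)} := by
    intro a b hab p s
    rcases (hρ a b).mp hab with hτ | ⟨ha, hb⟩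
    · exact τ.le_syntCon (fun _ _ huv hu => τ.trans hu huv) hτ p s
    · exact iff_of_false (fun h => ha ⟨ofList p, ofList s, τ.symm h⟩)
        (fun h => hb ⟨ofList p, ofList s, τ.symm h⟩)
  have hτ_of_dvd : ∀ a b : FreeMonoid ℕ, (∃ p s, τ (p * a * s) (ofList w)) →
      Satisfies (SyntMonoid {v | τ (ofList w) (ofList v)}) (toList a) (toList b) → τ a b := by
    rintro a b ⟨p, s, hps⟩ h
    exact hterm _ (stable_syntMonoid _) (toList a)
      ⟨toList (p * a * s), τ.symm hps, toList p, toList s, rfl⟩ _ h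
  intro u v
  refine ⟨Satisfies.of_con_le hρ_le, fun h => (Con.satisfies_quotient_iff ρ).mpr fun σ => ?_⟩
  have hσ := h.subst σ
  rw [hρ]
  by_cases hu : ∃ p s, τ (p * lift σ (ofList u) * s) (ofList w)
  · exact .inl (hτ_of_dvd _ _ hu hσ)
  by_cases hv : ∃ p s, τ (p * lift σ (ofList v) * s) (ofList w)
  · exact .inl (τ.symm (hτ_of_dvd _ _ hv fun φ => (hσ φ).symm))
  exact .inr ⟨hu, hv⟩

theorem stmt13 (τ : Con (FreeMonoid ℕ))
    (hone : ∀ u : FreeMonoid ℕ, τ 1 u → u = 1)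
    (w : Word) (hw : w ≠ [])
    (W : Set Word) (hWdef : W = {v : Word | τ (FreeMonoid.ofList w) (FreeMonoid.ofList v)})
    (hterm : ∀ (M : Type) [Monoid M], Stable W M →
      ∀ f : Word, (∃ x ∈ W, IsFactorOf f x) →
        IsTerm (fun u v => τ (FreeMonoid.ofList u) (FreeMonoid.ofList v)) M f)
    (ρ : Con (FreeMonoid ℕ))
    (hρ : ∀ u v : FreeMonoid ℕ, ρ u v ↔ (τ u v ∨
      ((¬ ∃ p s : FreeMonoid ℕ, τ (p * u * s) (FreeMonoid.ofList w)) ∧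
       (¬ ∃ p s : FreeMonoid ℕ, τ (p * v * s) (FreeMonoid.ofList w))))) :
    ∀ u v : Word, Satisfies ρ.Quotient u v ↔ Satisfies (SyntMonoid W) u v :=
  stmt13_general τ w W hWdef hterm ρ hρ
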